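/- In the Multi-Concept threshold test, the poison-absence rule g̃(X) = (X contains no Pz element) agrees with the true label on every training bag but disagrees with the true label on every test bag; hence the poison-absence rule achieves training accuracy 1 and test accuracy 0. -/
import Mathlib


open scoped Classical

section MultiConceptTest

variable {α : Type*} (Bg Pz C₁ C₂ : Set α)

/-- True (threshold-MIL) label: positive iff the bag contains both a `C₁`
element and a `C₂` element. -/
def trueLabel (X : Multiset α) : Prop :=
  (∃ x ∈ X, x ∈ C₁) ∧ (∃ x ∈ X, x ∈ C₂)

/-- The poison-absence rule: positive iff the bag contains no poison element. -/
def gTilde (X : Multiset α) : Prop := ¬ ∃ x ∈ X, x ∈ Pz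

/-- Training negative bag: exactly one poison, exactly one element of `C₁ ∪ C₂`,
plus background. -/
def TrainNeg (X : Multiset α) : Prop :=
  ∃ p ∈ Pz, ∃ c ∈ C₁ ∪ C₂, ∃ B : Multiset α,
    (∀ b ∈ B, b ∈ Bg) ∧ X = p ::ₘ c ::ₘ B

/-- Training positive bag: no poison, at least one `C₁` and one `C₂` element,
plus background. -/
def TrainPos (X : Multiset α) : Prop :=
  (∀ x ∈ X, x ∉ Pz) ∧ (∃ x ∈ X, x ∈ C₁) ∧ (∃ x ∈ X, x ∈ C₂) ∧
    (∀ x ∈ X, x ∈ Bg ∪ C₁ ∪ C₂)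

/-- Test negative bag: no poison, exactly one element of `C₁ ∪ C₂`, plus background. -/
noncomputable def TestNeg (X : Multiset α) : Prop :=
  (∀ x ∈ X, x ∉ Pz) ∧ (X.filter (fun x => x ∈ C₁ ∪ C₂)).card = 1 ∧
    (∀ x ∈ X, x ∈ Bg ∪ C₁ ∪ C₂)

/-- Test positive bag: exactly one poison, at least one `C₁` and one `C₂`
element, plus background. -/
def TestPos (X : Multiset α) : Prop :=
  ∃ p ∈ Pz, ∃ R : Multiset α, (∃ x ∈ R, x ∈ C₁) ∧ (∃ x ∈ R, x ∈ C₂) ∧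
    (∀ x ∈ R, x ∈ Bg ∪ C₁ ∪ C₂) ∧ X = p ::ₘ R

/-- In the Multi-Concept threshold test, the poison-absence rule agrees with
the true label on every training bag but disagrees with it on every test bag:
training accuracy 1 and test accuracy 0. -/
theorem poison_absence_train_perfect_test_zero
    (hBgPz : Disjoint Bg Pz) (hBgC₁ : Disjoint Bg C₁) (hBgC₂ : Disjoint Bg C₂)
    (hPzC₁ : Disjoint Pz C₁) (hPzC₂ : Disjoint Pz C₂) (hC₁C₂ : Disjoint C₁ C₂)
    (hBg : Bg.Nonempty) (hPz : Pz.Nonempty) (hC₁ : C₁.Nonempty) (hC₂ : C₂.Nonempty) :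
    (∀ X : Multiset α, TrainNeg Bg Pz C₁ C₂ X ∨ TrainPos Bg Pz C₁ C₂ X →
      (gTilde Pz X ↔ trueLabel C₁ C₂ X)) ∧
      (∀ X : Multiset α, TestNeg Bg Pz C₁ C₂ X ∨ TestPos Bg Pz C₁ C₂ X →
        ¬ (gTilde Pz X ↔ trueLabel C₁ C₂ X)) := by
  have disj : ∀ {S T : Set α}, Disjoint S T → ∀ {x}, x ∈ S → x ∉ T := by
    intro S T h x hx hx'
    exact (h.le_bot ⟨hx, hx'⟩)
  constructor
  · rintro X (⟨p, hp, c, hc, B, hB, rfl⟩ | ⟨hnoPz, h1, h2, _⟩)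
    · constructor
      · intro hg
        exact absurd ⟨p, by simp, hp⟩ hg
      · rintro ⟨⟨x, hx, hx1⟩, ⟨y, hy, hy2⟩⟩
        exfalso
        -- derive contradiction: cannot have both C₁ and C₂ elements
        have hxmem : x = p ∨ x = c ∨ x ∈ B := by
          simpa [Multiset.mem_cons] using hx
        have hymem : y = p ∨ y = c ∨ y ∈ B := by
          simpa [Multiset.mem_cons] using hy
        have hx' : x = c := by
          rcases hxmem with rfl | rfl | hxB
          · exact absurd hx1 (disj hPzC₁ hp)
          · rfl
          · exact absurd hx1 (disj hBgC₁ (hB x hxB))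
        have hy' : y = c := by
          rcases hymem with rfl | rfl | hyB
          · exact absurd hy2 (disj hPzC₂ hp)
          · rfl
          · exact absurd hy2 (disj hBgC₂ (hB y hyB))
        subst hx'; subst hy'
        exact disj hC₁C₂ hx1 hy2
    · constructor
      · intro _
        exact ⟨h1, h2⟩
      · intro _
        intro ⟨x, hx, hxPz⟩
        exact hnoPz x hx hxPz
  · rintro X (⟨hnoPz, hcard, _⟩ | ⟨p, hp, R, ⟨x, hx, hx1⟩, ⟨y, hy, hy2⟩, hR, rfl⟩) hiff
    · -- gTilde holds, so trueLabel holds, contradicting card = 1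
      have hg : gTilde Pz X := fun ⟨x, hx, hxPz⟩ => hnoPz x hx hxPz
      obtain ⟨⟨x, hx, hx1⟩, ⟨y, hy, hy2⟩⟩ := hiff.mp hg
      have hxy : x ≠ y := fun h => disj hC₁C₂ hx1 (h ▸ hy2)
      have hxf : x ∈ X.filter (fun x => x ∈ C₁ ∪ C₂) :=
        Multiset.mem_filter.mpr ⟨hx, Or.inl hx1⟩
      have hyf : y ∈ X.filter (fun x => x ∈ C₁ ∪ C₂) :=
        Multiset.mem_filter.mpr ⟨hy, Or.inr hy2⟩
      have hyf' : y ∈ (X.filter (fun x => x ∈ C₁ ∪ C₂)).erase x :=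
        (Multiset.mem_erase_of_ne (Ne.symm hxy)).mpr hyf
      have h2 : 2 ≤ (X.filter (fun x => x ∈ C₁ ∪ C₂)).card := by
        have heq := Multiset.card_erase_add_one hxf
        have hpos : 0 < ((X.filter (fun x => x ∈ C₁ ∪ C₂)).erase x).card :=
          Multiset.card_pos_iff_exists_mem.mpr ⟨y, hyf'⟩
        omega
      omega
    · -- gTilde fails but trueLabel holds
      have htrue : trueLabel C₁ C₂ (p ::ₘ R) :=
        ⟨⟨x, Multiset.mem_cons_of_mem hx, hx1⟩, ⟨y, Multiset.mem_cons_of_mem hy, hy2⟩⟩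
      exact (hiff.mpr htrue) ⟨p, Multiset.mem_cons_self p R, hp⟩

end MultiConceptTest
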